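/- Suppose Assumption A holds for X. Let σ be an F°-stopping time taking finitely many values and define E°_σ(X)(ω) := E°_{σ(ω)}(X)(ω). Then for every P ∈ 𝒫, the random variable E°_σ(X) is a P-essential supremum of the family {E^{P'}[X|F°_σ] : P' ∈ 𝒫(F°_σ,P)}. -/

import Mathlib

open MeasureTheory Set Filter

noncomputable section

/-- The canonical path space: continuous paths in `ℝ^d` starting at `0`
(paths indexed by `ℝ`; only the restriction to `[0,T]` is ever used). -/
def PathSpace (d : ℕ) : Type :=
  {ω : C(ℝ, EuclideanSpace ℝ (Fin d)) // ω 0 = 0}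

/-- The raw σ-algebra `F°_t = σ(B_s ; 0 ≤ s ≤ t)` generated by the canonical process. -/
def rawSA (d : ℕ) (t : ℝ) : MeasurableSpace (PathSpace d) :=
  ⨆ s ∈ Set.Icc (0 : ℝ) t, MeasurableSpace.comap (fun ω : PathSpace d => ω.1 s) inferInstance

lemma rawSA_mono {d : ℕ} : Monotone (rawSA d) := by
  intro s t hst
  refine iSup₂_le fun u hu => ?_
  exact le_iSup₂_of_le u ⟨hu.1, hu.2.trans hst⟩ le_rfl

/-- The raw filtration `F°`, as a filtration indexed by `ℝ` (constant after time `T`),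
with ambient σ-algebra `F°_T`. -/
def rawFilt (T : ℝ) (d : ℕ) : Filtration ℝ (rawSA d T) where
  seq t := rawSA d (min t T)
  mono' := fun _ _ hst => rawSA_mono (min_le_min hst le_rfl)
  le' := fun t => rawSA_mono (min_le_right t T)

/-- A bounded function. -/
def BddFun {α : Type*} (f : α → ℝ) : Prop := ∃ C : ℝ, ∀ x, |f x| ≤ C

/-- `Y` is a `P`-essential supremum of the family `F` of random variables. -/
def IsEssSupOf {α : Type*} {m0 : MeasurableSpace α} (P : @Measure α m0) (F : Set (α → ℝ))
    (Y : α → ℝ) : Prop :=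
  (∀ f ∈ F, f ≤ᵐ[P] Y) ∧ ∀ Z : α → ℝ, (∀ f ∈ F, f ≤ᵐ[P] Z) → Y ≤ᵐ[P] Z

/-- Two measures agree on the σ-algebra `G`. -/
def EqOnSA {α : Type*} {m0 : MeasurableSpace α} (G : MeasurableSpace α)
    (P Q : @Measure α m0) : Prop :=
  ∀ A : Set α, MeasurableSet[G] A → P A = Q A

/-- `𝔓(G, P) = {P' ∈ 𝔓 : P' = P on G}`. -/
def MSet {α : Type*} {m0 : MeasurableSpace α} (𝔓 : Set (@Measure α m0))
    (G : MeasurableSpace α) (P : @Measure α m0) : Set (@Measure α m0) :=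
  {Q ∈ 𝔓 | EqOnSA G Q P}

/-- The family `{E^{P'}[X | G] : P' ∈ 𝔓(G, P)}` of conditional expectations. -/
def condExpFam {α : Type*} {m0 : MeasurableSpace α} (𝔓 : Set (@Measure α m0))
    (G : MeasurableSpace α) (P : @Measure α m0) (X : α → ℝ) : Set (α → ℝ) :=
  {g | ∃ Q ∈ MSet 𝔓 G P, g = condExp G Q X}

/-- `X ∈ L¹_𝔓` : `mT`-measurable with `sup_{P ∈ 𝔓} E^P[|X|] < ∞`. -/
def MemL1 {α : Type*} {m0 : MeasurableSpace α} (mT : MeasurableSpace α)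
    (𝔓 : Set (@Measure α m0)) (X : α → ℝ) : Prop :=
  Measurable[mT] X ∧ (∀ P ∈ 𝔓, Integrable X P) ∧ ∃ M : ℝ, ∀ P ∈ 𝔓, ∫ ω, |X ω| ∂P ≤ M

/-- `Pb` is the pasting of `(P₁, P₂)` over `(Λ, G)` under `P`, characterized through
integrals of bounded measurable functions. -/
def IsPastingOf {α : Type*} {m0 : MeasurableSpace α} (mT : MeasurableSpace α)
    (G : MeasurableSpace α) (P P₁ P₂ Pb : @Measure α m0) (Λ : Set α) : Prop :=
  ∀ h : α → ℝ, Measurable[mT] h → BddFun h →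
    ∫ x, h x ∂Pb
      = ∫ x, (Λ.indicator (condExp G P₁ h) x + Λᶜ.indicator (condExp G P₂ h) x) ∂P

/-- `𝔓` is stable under `F°`-pasting (along finite-valued `F°`-stopping times). -/
def StableUnderPasting (T : ℝ) (d : ℕ)
    (𝔓 : Set (@Measure (PathSpace d) (rawSA d T))) : Prop :=
  ∀ P ∈ 𝔓, ∀ τ : PathSpace d → ℝ, ∀ hτ : IsStoppingTime (rawFilt T d) (fun ω => (τ ω : WithTop ℝ)),
    (Set.range τ).Finite → (∀ ω, τ ω ∈ Set.Icc (0 : ℝ) T) →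
    ∀ Λ : Set (PathSpace d), MeasurableSet[hτ.measurableSpace] Λ →
    ∀ P₁ ∈ MSet 𝔓 hτ.measurableSpace P, ∀ P₂ ∈ MSet 𝔓 hτ.measurableSpace P,
    ∀ Pb : @Measure (PathSpace d) (rawSA d T),
      IsPastingOf (rawSA d T) hτ.measurableSpace P P₁ P₂ Pb Λ → Pb ∈ 𝔓

end


/-!
On a level set `{σ = t}` the σ-algebras `F°_σ` and `F°_t` have the same trace, so there
`E^{P'}[X | F°_σ] = E^{P'}[X | F°_t] ≤ E°_t(X)`; as `{σ = t} ∩ {E^{P'}[X | F°_σ] > E°_t(X)}` lies in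
`F°_σ`, on which `P'` and `P` agree, the bound holds `P`-a.s. Conversely, every
`P' ∈ 𝒫(F°_t, P)` pasted with `P` at the constant time `t` gives the measure
`P'` on `{σ = t}` and `P` off it, which lies in `𝒫(F°_σ, P)` and whose `F°_σ`-conditional
expectation agrees with `E^{P'}[X | F°_t]` on `{σ = t}`. So a bound for the `F°_σ`-family bounds
the `F°_t`-family on `{σ = t}`, hence bounds `E°_t(X)` there. Finitely many level sets cover the
path space.
-/

section Piecewise

variable {α : Type*} {m0 : MeasurableSpace α}

noncomputable def MeasureTheory.Measure.piecewise (s : Set α) (μ ν : Measure α) : Measure α :=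
  μ.restrict s + ν.restrict sᶜ

instance (s : Set α) (μ ν : Measure α) [IsFiniteMeasure μ] [IsFiniteMeasure ν] :
    IsFiniteMeasure (Measure.piecewise s μ ν) :=
  inferInstanceAs (IsFiniteMeasure (μ.restrict s + ν.restrict sᶜ))

theorem MeasureTheory.Measure.piecewise_restrict {s : Set α} (hs : MeasurableSet s)
    (μ ν : Measure α) : (Measure.piecewise s μ ν).restrict s = μ.restrict s := by
  rw [Measure.piecewise, Measure.restrict_add, Measure.restrict_restrict hs,
    Measure.restrict_restrict hs, inter_self, inter_compl_self, Measure.restrict_empty, add_zero]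

end Piecewise

section EqOnSA

variable {α : Type*} {m m0 : MeasurableSpace α} {P Q : Measure[m0] α} {s : Set α}

theorem EqOnSA.trim_eq (hm : m ≤ m0) (h : EqOnSA m P Q) : P.trim hm = Q.trim hm :=
  @Measure.ext _ m _ _ fun A hA => by
    rw [trim_measurableSet_eq hm hA, trim_measurableSet_eq hm hA, h A hA]

theorem EqOnSA.restrict (hm : m ≤ m0) (h : EqOnSA m P Q) (hs : MeasurableSet[m] s) :
    EqOnSA m (P.restrict s) (Q.restrict s) := fun A hA => by
  rw [Measure.restrict_apply' (hm s hs), Measure.restrict_apply' (hm s hs), h _ (hA.inter hs)]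

theorem EqOnSA.integrable (hm : m ≤ m0) (h : EqOnSA m P Q) {f : α → ℝ}
    (hf : StronglyMeasurable[m] f) (hfP : Integrable f P) : Integrable f Q :=
  integrable_of_integrable_trim hm (h.trim_eq hm ▸ hfP.trim hm hf)

theorem EqOnSA.setIntegral_eq (hm : m ≤ m0) (h : EqOnSA m P Q) (hs : MeasurableSet[m] s)
    {f : α → ℝ} (hf : StronglyMeasurable[m] f) :
    ∫ x in s, f x ∂P = ∫ x in s, f x ∂Q := by
  rw [← integral_indicator (hm s hs), ← integral_indicator (hm s hs),
    integral_trim hm (hf.indicator hs), integral_trim hm (hf.indicator hs), h.trim_eq hm]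

theorem EqOnSA.ae_le (hm : m ≤ m0) (h : EqOnSA m P Q) {f g : α → ℝ}
    (hf : StronglyMeasurable[m] f) (hg : StronglyMeasurable[m] g) (hfg : f ≤ᵐ[P] g) :
    f ≤ᵐ[Q] g := by
  rw [← StronglyMeasurable.ae_le_trim_iff hm hf hg, ← h.trim_eq hm,
    StronglyMeasurable.ae_le_trim_iff hm hf hg]
  exact hfg

theorem EqOnSA.ae_restrict_le (hm : m ≤ m0) (h : EqOnSA m P Q) (hs : MeasurableSet[m] s)
    {f g : α → ℝ} (hf : StronglyMeasurable[m] (s.indicator f))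
    (hg : StronglyMeasurable[m] (s.indicator g)) (hfg : f ≤ᵐ[P.restrict s] g) :
    f ≤ᵐ[Q.restrict s] g := by
  have h_ind : ∀ (μ : Measure α) (u : α → ℝ), s.indicator u =ᵐ[μ.restrict s] u :=
    fun _ _ => indicator_ae_eq_restrict (hm s hs)
  have := (h.restrict hm hs).ae_le hm hf hg
    ((h_ind P f).trans_le (hfg.trans_eq (h_ind P g).symm))
  exact (h_ind Q f).symm.trans_le (this.trans_eq (h_ind Q g))

theorem isPastingOf_piecewise [IsFiniteMeasure P] [IsFiniteMeasure Q] {R : Measure α}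
    [IsFiniteMeasure R] (hm : m ≤ m0) (hs : MeasurableSet[m] s) (hQ : EqOnSA m Q P)
    (hR : EqOnSA m R P) : IsPastingOf m0 m P Q R (Measure.piecewise s Q R) s := by
  intro h h_meas ⟨C, hC⟩
  have h_int : ∀ μ : Measure α, [IsFiniteMeasure μ] → Integrable h μ := fun μ _ =>
    .of_bound h_meas.aestronglyMeasurable C (ae_of_all _ hC)
  have h_condExp_int : ∀ μ : Measure α, [IsFiniteMeasure μ] → EqOnSA m μ P →
      Integrable (condExp m μ h) P := fun μ _ hμ =>
    hμ.integrable hm stronglyMeasurable_condExp integrable_condExp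
  rw [Measure.piecewise, integral_add_measure (h_int Q).restrict (h_int R).restrict,
    integral_add ((h_condExp_int Q hQ).indicator (hm s hs))
      ((h_condExp_int R hR).indicator (hm _ hs.compl)),
    integral_indicator (hm s hs), integral_indicator (hm _ hs.compl),
    ← setIntegral_condExp hm (h_int Q) hs, ← setIntegral_condExp hm (h_int R) hs.compl,
    hQ.setIntegral_eq hm hs stronglyMeasurable_condExp,
    hR.setIntegral_eq hm hs.compl stronglyMeasurable_condExp]

end EqOnSA

theorem condExp_ae_eq_restrict_of_restrict_eq {α : Type*} {m m0 : MeasurableSpace α}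
    {μ ν : Measure[m0] α} [IsFiniteMeasure μ] [IsFiniteMeasure ν] (hm : m ≤ m0) {s : Set α}
    (hs : MeasurableSet[m] s) (hμν : μ.restrict s = ν.restrict s) {f : α → ℝ}
    (hfμ : Integrable f μ) (hfν : Integrable f ν) :
    μ[f | m] =ᵐ[μ.restrict s] ν[f | m] := by
  have hμ := condExp_restrict_ae_eq_restrict hm hs hfμ
  have hν := condExp_restrict_ae_eq_restrict hm hs hfν
  rw [hμν] at hμ ⊢
  exact hμ.symm.trans hν

theorem IsEssSupOf.ae_restrict_le {α : Type*} {m0 : MeasurableSpace α} {P : Measure α}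
    {F : Set (α → ℝ)} {Y : α → ℝ} (hY : IsEssSupOf P F Y) {s : Set α} (hs : MeasurableSet s)
    {Z : α → ℝ} (hZ : ∀ f ∈ F, f ≤ᵐ[P.restrict s] Z) : Y ≤ᵐ[P.restrict s] Z := by
  classical
  have hY_le : Y ≤ᵐ[P] s.piecewise Z Y := hY.2 _ fun f hf => by
    filter_upwards [hY.1 f hf, (ae_restrict_iff' hs).1 (hZ f hf)] with x hfY hfZ
    by_cases hx : x ∈ s
    · simpa [hx] using hfZ hx
    · simpa [hx] using hfY
  filter_upwards [ae_restrict_of_ae hY_le, ae_restrict_mem hs] with x hx hxs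
  simpa [hxs] using hx

theorem ae_of_forall_ae_restrict_eq {α β : Type*} {m0 : MeasurableSpace α} {μ : Measure α}
    {τ : α → β} (hτ : (range τ).Countable) (hτ_meas : ∀ b ∈ range τ, MeasurableSet {x | τ x = b})
    {p : β → α → Prop} (h : ∀ b ∈ range τ, ∀ᵐ x ∂μ.restrict {x | τ x = b}, p b x) :
    ∀ᵐ x ∂μ, p (τ x) x := by
  have h' : ∀ᵐ x ∂μ, ∀ b ∈ range τ, τ x = b → p b x :=
    (ae_ball_iff hτ).2 fun b hb => (ae_restrict_iff' (hτ_meas b hb)).1 (h b hb)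
  filter_upwards [h'] with x hx
  exact hx (τ x) (mem_range_self x) rfl

section StoppingTime

variable {Ω ι : Type*} [LinearOrder ι] [TopologicalSpace ι] [OrderTopology ι]
  [FirstCountableTopology ι] {m0 : MeasurableSpace Ω} {ℱ : Filtration ι m0}
  {τ : Ω → WithTop ι} {P Q : Measure Ω}

theorem MeasureTheory.IsStoppingTime.stronglyMeasurable_indicator_eq
    (hτ : IsStoppingTime ℱ τ) (i : ι) {f : Ω → ℝ} (hf : StronglyMeasurable[ℱ i] f) :
    StronglyMeasurable[hτ.measurableSpace] ({ω | τ ω = i}.indicator f) :=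
  StronglyMeasurable.stronglyMeasurable_of_measurableSpace_le_on (hτ.measurableSet_eq i)
    (fun A hA => by rw [inter_comm] at hA ⊢; exact (hτ.measurableSet_inter_eq_iff A i).2 hA)
    (hf.indicator (hτ.measurableSet_eq i)) fun _ hω => indicator_of_notMem hω f

theorem MeasureTheory.IsStoppingTime.eqOnSA_piecewise (hτ : IsStoppingTime ℱ τ) (i : ι)
    (hQP : EqOnSA (ℱ i) Q P) :
    EqOnSA hτ.measurableSpace (Measure.piecewise {ω | τ ω = i} Q P) P := fun A hA => by
  have hΛ := hτ.measurableSpace_le _ (hτ.measurableSet_eq' i)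
  rw [Measure.piecewise, Measure.add_apply, Measure.restrict_apply' hΛ,
    Measure.restrict_apply' hΛ.compl,
    hQP _ ((hτ.measurableSet_inter_eq_iff A i).1 (hA.inter (hτ.measurableSet_eq' i))),
    ← sdiff_eq, measure_inter_add_sdiff A hΛ]

theorem MeasureTheory.IsStoppingTime.condExp_le_restrict_eq [IsFiniteMeasure Q]
    (hτ : IsStoppingTime ℱ τ) (i : ι) (hQP : EqOnSA hτ.measurableSpace Q P) {X Y : Ω → ℝ}
    (hY : StronglyMeasurable[ℱ i] Y) (hXY : Q[X | ℱ i] ≤ᵐ[Q] Y) :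
    Q[X | hτ.measurableSpace] ≤ᵐ[P.restrict {ω | τ ω = i}] Y := by
  have hΛ := hτ.measurableSet_eq' i
  refine hQP.ae_restrict_le hτ.measurableSpace_le hΛ (stronglyMeasurable_condExp.indicator hΛ)
    (hτ.stronglyMeasurable_indicator_eq i hY) ?_
  exact (condExp_stopping_time_ae_eq_restrict_eq hτ i).trans_le (ae_restrict_of_ae hXY)

theorem MeasureTheory.IsStoppingTime.condExp_le_condExp_piecewise [IsFiniteMeasure P]
    [IsFiniteMeasure Q] (hτ : IsStoppingTime ℱ τ) (i : ι) (hQP : EqOnSA (ℱ i) Q P) {X : Ω → ℝ}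
    (hXQ : Integrable X Q) (hXR : Integrable X (Measure.piecewise {ω | τ ω = i} Q P)) :
    Q[X | ℱ i] ≤ᵐ[P.restrict {ω | τ ω = i}]
      (Measure.piecewise {ω | τ ω = i} Q P)[X | hτ.measurableSpace] := by
  set R := Measure.piecewise {ω | τ ω = i} Q P
  have hΛ := hτ.measurableSet_eq i
  have hR_restrict : R.restrict {ω | τ ω = i} = Q.restrict {ω | τ ω = i} :=
    Measure.piecewise_restrict (ℱ.le i _ hΛ) Q P
  have hQR_i : Q[X | ℱ i] =ᵐ[Q.restrict {ω | τ ω = i}] R[X | ℱ i] :=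
    condExp_ae_eq_restrict_of_restrict_eq (ℱ.le i) hΛ hR_restrict.symm hXQ hXR
  have hR_iτ : R[X | ℱ i] =ᵐ[R.restrict {ω | τ ω = i}] R[X | hτ.measurableSpace] :=
    (condExp_stopping_time_ae_eq_restrict_eq hτ i).symm
  have hQR : Q[X | ℱ i] =ᵐ[R.restrict {ω | τ ω = i}] R[X | hτ.measurableSpace] := by
    rw [hR_restrict] at hR_iτ ⊢
    exact hQR_i.trans hR_iτ
  exact (hτ.eqOnSA_piecewise i hQP).ae_restrict_le hτ.measurableSpace_le
    (hτ.measurableSet_eq' i) (hτ.stronglyMeasurable_indicator_eq i stronglyMeasurable_condExp)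
    (stronglyMeasurable_condExp.indicator (hτ.measurableSet_eq' i)) hQR.le

end StoppingTime

theorem rawFilt_eq_of_le {T t : ℝ} (d : ℕ) (ht : t ≤ T) : rawFilt T d t = rawSA d t := by
  change rawSA d (min t T) = rawSA d t
  rw [min_eq_left ht]

theorem StableUnderPasting.piecewise_mem {T : ℝ} {d : ℕ}
    {𝔓 : Set (@Measure (PathSpace d) (rawSA d T))} (h𝔓 : StableUnderPasting T d 𝔓)
    {P Q : @Measure (PathSpace d) (rawSA d T)} [IsFiniteMeasure P] [IsFiniteMeasure Q]
    (hP : P ∈ 𝔓) {t : ℝ} (ht : t ∈ Icc 0 T) {Λ : Set (PathSpace d)}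
    (hΛ : MeasurableSet[rawSA d t] Λ) (hQ : Q ∈ MSet 𝔓 (rawSA d t) P) :
    Measure.piecewise Λ Q P ∈ 𝔓 := by
  have hτ := isStoppingTime_const (rawFilt T d) t
  have hℱτ : hτ.measurableSpace = rawSA d t := by
    rw [IsStoppingTime.measurableSpace_const, rawFilt_eq_of_le d ht.2]
  rw [← hℱτ] at hΛ hQ
  exact h𝔓 P hP _ hτ finite_range_const (fun _ => ht) Λ hΛ Q hQ P ⟨hP, fun _ _ => rfl⟩ _
    (isPastingOf_piecewise hτ.measurableSpace_le hΛ hQ.2 fun _ _ => rfl)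

theorem setOf_coe_eq_coe {α β : Type*} (f : α → β) (b : β) :
    {x | (f x : WithTop β) = b} = {x | f x = b} := by
  simp only [WithTop.coe_inj]

section PathSpace

variable {T : ℝ} {d : ℕ} {σ : PathSpace d → ℝ}

theorem measurableSet_rawSA_eq (hσ : IsStoppingTime (rawFilt T d) fun ω => (σ ω : WithTop ℝ))
    {t : ℝ} (ht : t ≤ T) : MeasurableSet[rawSA d t] {ω | σ ω = t} := by
  have h := hσ.measurableSet_eq t
  rwa [rawFilt_eq_of_le d ht, setOf_coe_eq_coe] at h

theorem condExp_rawFilt_le_restrict_eq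
    (hσ : IsStoppingTime (rawFilt T d) fun ω => (σ ω : WithTop ℝ)) {t : ℝ} (ht : t ≤ T)
    {P Q : @Measure (PathSpace d) (rawSA d T)} [IsFiniteMeasure Q]
    (hQP : EqOnSA hσ.measurableSpace Q P) {X Y : PathSpace d → ℝ}
    (hY : Measurable[rawSA d t] Y) (hXY : Q[X | rawSA d t] ≤ᵐ[Q] Y) :
    Q[X | hσ.measurableSpace] ≤ᵐ[P.restrict {ω | σ ω = t}] Y := by
  rw [← rawFilt_eq_of_le d ht] at hY hXY
  have h_le := hσ.condExp_le_restrict_eq t hQP hY.stronglyMeasurable hXY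
  rwa [setOf_coe_eq_coe] at h_le

theorem StableUnderPasting.exists_condExp_le {𝔓 : Set (@Measure (PathSpace d) (rawSA d T))}
    (h𝔓 : StableUnderPasting T d 𝔓) (hprob : ∀ P ∈ 𝔓, IsProbabilityMeasure P)
    {X : PathSpace d → ℝ} (hX : ∀ P ∈ 𝔓, Integrable X P)
    (hσ : IsStoppingTime (rawFilt T d) fun ω => (σ ω : WithTop ℝ))
    {P : @Measure (PathSpace d) (rawSA d T)} (hP : P ∈ 𝔓) {t : ℝ} (ht : t ∈ Icc 0 T)
    {Q : @Measure (PathSpace d) (rawSA d T)} (hQ : Q ∈ MSet 𝔓 (rawSA d t) P) :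
    ∃ R ∈ MSet 𝔓 hσ.measurableSpace P,
      Q[X | rawSA d t] ≤ᵐ[P.restrict {ω | σ ω = t}] R[X | hσ.measurableSpace] := by
  have := hprob P hP
  have := hprob Q hQ.1
  have hR := h𝔓.piecewise_mem hP ht (measurableSet_rawSA_eq hσ ht.2) hQ
  have := hprob _ hR
  have hQP : EqOnSA (rawFilt T d t) Q P := rawFilt_eq_of_le d ht.2 ▸ hQ.2
  have hRP := hσ.eqOnSA_piecewise t hQP
  have h_le := hσ.condExp_le_condExp_piecewise t hQP (hX Q hQ.1)
    (by simpa only [setOf_coe_eq_coe] using hX _ hR)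
  simp only [setOf_coe_eq_coe, rawFilt_eq_of_le d ht.2] at h_le hRP
  exact ⟨_, ⟨hR, hRP⟩, h_le⟩

end PathSpace

theorem statement5_general {T : ℝ} {d : ℕ}
    (𝔓 : Set (@Measure (PathSpace d) (rawSA d T)))
    (hprob : ∀ P ∈ 𝔓, IsProbabilityMeasure P)
    -- Assumption A
    (X : PathSpace d → ℝ) (hX : MemL1 (rawSA d T) 𝔓 X)
    (hstable : StableUnderPasting T d 𝔓)
    (Eo : ℝ → PathSpace d → ℝ)
    (hEomeas : ∀ t ∈ Set.Icc (0 : ℝ) T, Measurable[rawSA d t] (Eo t))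
    (hEoess : ∀ t ∈ Set.Icc (0 : ℝ) T, ∀ P ∈ 𝔓,
      IsEssSupOf P (condExpFam 𝔓 (rawSA d t) P X) (Eo t))
    -- the stopping time
    (σ : PathSpace d → ℝ) (hσ : IsStoppingTime (rawFilt T d) (fun ω => (σ ω : WithTop ℝ)))
    (hσfin : (Set.range σ).Finite) (hσmem : ∀ ω, σ ω ∈ Set.Icc (0 : ℝ) T) :
    ∀ P ∈ 𝔓,
      IsEssSupOf P (condExpFam 𝔓 hσ.measurableSpace P X) (fun ω => Eo (σ ω) ω) := by
  intro P hP
  have hmem : ∀ t ∈ range σ, t ∈ Icc 0 T := by rintro _ ⟨ω, rfl⟩; exact hσmem ω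
  have hlevel : ∀ t ∈ range σ, MeasurableSet[rawSA d T] {ω | σ ω = t} :=
    fun t ht => rawSA_mono (hmem t ht).2 _ (measurableSet_rawSA_eq hσ (hmem t ht).2)
  refine ⟨?_, fun Z hZ => ?_⟩
  · rintro _ ⟨Q, ⟨hQ, hQP⟩, rfl⟩
    have := hprob Q hQ
    exact ae_of_forall_ae_restrict_eq (p := fun t ω => Q[X | hσ.measurableSpace] ω ≤ Eo t ω)
      hσfin.countable hlevel fun t ht => condExp_rawFilt_le_restrict_eq hσ (hmem t ht).2 hQP
      (hEomeas t (hmem t ht)) ((hEoess t (hmem t ht) Q hQ).1 _ ⟨Q, ⟨hQ, fun _ _ => rfl⟩, rfl⟩)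
  · refine ae_of_forall_ae_restrict_eq (p := fun t ω => Eo t ω ≤ Z ω) hσfin.countable hlevel
      fun t ht => (hEoess t (hmem t ht) P hP).ae_restrict_le (hlevel t ht) ?_
    rintro _ ⟨Q, hQ, rfl⟩
    obtain ⟨R, hR, hQR⟩ := hstable.exists_condExp_le hprob hX.2.1 hσ hP (hmem t ht) hQ
    exact hQR.trans (ae_restrict_of_ae (hZ _ ⟨R, hR, rfl⟩))

/-- under Assumption A, the raw sublinear expectation evaluated at a
finite-valued `F°`-stopping time `σ` is a `P`-essential supremum of the family
`{E^{P'}[X | F°_σ] : P' ∈ 𝔓(F°_σ, P)}`, for every `P ∈ 𝔓`. -/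
theorem statement5 {T : ℝ} (hT : 0 < T) {d : ℕ}
    (𝔓 : Set (@Measure (PathSpace d) (rawSA d T))) (h𝔓 : 𝔓.Nonempty)
    (hprob : ∀ P ∈ 𝔓, IsProbabilityMeasure P)
    -- Assumption A
    (X : PathSpace d → ℝ) (hX : MemL1 (rawSA d T) 𝔓 X)
    (hstable : StableUnderPasting T d 𝔓)
    (Eo : ℝ → PathSpace d → ℝ)
    (hEomeas : ∀ t ∈ Set.Icc (0 : ℝ) T, Measurable[rawSA d t] (Eo t))
    (hEoess : ∀ t ∈ Set.Icc (0 : ℝ) T, ∀ P ∈ 𝔓,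
      IsEssSupOf P (condExpFam 𝔓 (rawSA d t) P X) (Eo t))
    -- the stopping time
    (σ : PathSpace d → ℝ) (hσ : IsStoppingTime (rawFilt T d) (fun ω => (σ ω : WithTop ℝ)))
    (hσfin : (Set.range σ).Finite) (hσmem : ∀ ω, σ ω ∈ Set.Icc (0 : ℝ) T) :
    ∀ P ∈ 𝔓,
      IsEssSupOf P (condExpFam 𝔓 hσ.measurableSpace P X) (fun ω => Eo (σ ω) ω) :=
  statement5_general 𝔓 hprob X hX hstable Eo hEomeas hEoess σ hσ hσfin hσmem
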